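/- arXiv:math/0209401 — 3 statements merged into one kernel-verified Lean document; each statement's English description precedes it below -/
import Mathlib

section
/- Let (H, R) be a quasi-triangular Hopf algebra, A a left H-module algebra, and define the q-commutator [a,b]_χ := ab − m(χ(a ⊗ b)) with χ(a ⊗ b) = (R₂ ▷ b) ⊗ (R₁ ▷ a). Writing χ(a ⊗ b) = Σᵢ σᵢ ⊗ eᵢ, the generalized Leibniz rule on the second variable holds: [a, bc]_χ = [a,b]_χ · c + Σᵢ σᵢ · [eᵢ, c]_χ for all a, b, c ∈ A. Equivalently, [·,·]_χ ∘ (id ⊗ m) = m ∘ ( [·,·]_χ ⊗ id ) + m ∘ (id ⊗ [·,·]_χ) ∘ (χ ⊗ id) as maps A ⊗ A ⊗ A → A. -/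
set_option synthInstance.maxHeartbeats 1000000


/- STATEMENT 0: The R-matrix of a quasi-triangular Hopf algebra satisfies the
quantum Yang–Baxter equation R₁₂R₁₃R₂₃ = R₂₃R₁₃R₁₂ in H ⊗ H ⊗ H. -/

open TensorProduct

noncomputable section

variable (k H : Type*) [Field k] [Ring H] [HopfAlgebra k H]

/-- `a ⊗ b ↦ a ⊗ b ⊗ 1` (legs 1,2 of `(H ⊗ H) ⊗ H`). -/
def leg12 : H ⊗[k] H →ₐ[k] (H ⊗[k] H) ⊗[k] H := Algebra.TensorProduct.includeLeft

/-- `a ⊗ b ↦ a ⊗ 1 ⊗ b` (legs 1,3 of `(H ⊗ H) ⊗ H`). -/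
def leg13 : H ⊗[k] H →ₐ[k] (H ⊗[k] H) ⊗[k] H :=
  Algebra.TensorProduct.map Algebra.TensorProduct.includeLeft (AlgHom.id k H)

/-- `a ⊗ b ↦ 1 ⊗ a ⊗ b` (legs 2,3 of `(H ⊗ H) ⊗ H`). -/
def leg23 : H ⊗[k] H →ₐ[k] (H ⊗[k] H) ⊗[k] H :=
  Algebra.TensorProduct.map Algebra.TensorProduct.includeRight (AlgHom.id k H)

/-- `a ⊗ b ↦ a ⊗ (b ⊗ 1)` (legs 1,2 of `H ⊗ (H ⊗ H)`). -/
def leg12' : H ⊗[k] H →ₐ[k] H ⊗[k] (H ⊗[k] H) :=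
  Algebra.TensorProduct.map (AlgHom.id k H) Algebra.TensorProduct.includeLeft

/-- `a ⊗ b ↦ a ⊗ (1 ⊗ b)` (legs 1,3 of `H ⊗ (H ⊗ H)`). -/
def leg13' : H ⊗[k] H →ₐ[k] H ⊗[k] (H ⊗[k] H) :=
  Algebra.TensorProduct.map (AlgHom.id k H) Algebra.TensorProduct.includeRight

/-- A quasi-triangular structure on the Hopf algebra `H`: an invertible element
`R ∈ H ⊗ H` such that `Δᵒᵖ(h) = R Δ(h) R⁻¹`, `(Δ ⊗ id)(R) = R₁₃R₂₃` and
`(id ⊗ Δ)(R) = R₁₃R₁₂`. -/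
structure QuasiTriangular where
  R : H ⊗[k] H
  Rinv : H ⊗[k] H
  mul_inv : R * Rinv = 1
  inv_mul : Rinv * R = 1
  intertwine : ∀ h : H,
    (TensorProduct.comm k H H) (Coalgebra.comul h) = R * Coalgebra.comul h * Rinv
  comul_id : TensorProduct.map Coalgebra.comul LinearMap.id R = leg13 k H R * leg23 k H R
  id_comul : TensorProduct.map LinearMap.id Coalgebra.comul R = leg13' k H R * leg12' k H R

variable (A : Type*) [Ring A] [Algebra k A]

/-- A left `H`-module-algebra structure on the `k`-algebra `A`: an action of `H`
by `k`-linear endomorphisms such that `h ▷ (ab) = (h₁ ▷ a)(h₂ ▷ b)` and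
`h ▷ 1 = ε(h) 1`. -/
structure ModuleAlgebra where
  act : H →ₐ[k] Module.End k A
  act_mul : ∀ (h : H) (a b : A), act h (a * b) =
    LinearMap.mul' k A
      ((TensorProduct.homTensorHomMap (RingHom.id k) A A A A)
        ((TensorProduct.map act.toLinearMap act.toLinearMap) (Coalgebra.comul h))
        (a ⊗ₜ[k] b))
  act_one : ∀ h : H, act h (1 : A) = Coalgebra.counit (R := k) h • (1 : A)

variable {k H A}

/-- The braiding associated to an element `R = Σ R₁ ⊗ R₂` of `H ⊗ H`:
`a ⊗ b ↦ (R₂ ▷ b) ⊗ (R₁ ▷ a)`. -/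
def braid (MA : ModuleAlgebra k H A) (R : H ⊗[k] H) : A ⊗[k] A →ₗ[k] A ⊗[k] A :=
  (TensorProduct.comm k A A).toLinearMap ∘ₗ
    (TensorProduct.homTensorHomMap (RingHom.id k) A A A A)
      ((TensorProduct.map MA.act.toLinearMap MA.act.toLinearMap) R)

/-- The deformed commutator `[a,b]_χ = m((id - χ)(a ⊗ b))` associated to a braiding
`χ : A ⊗ A → A ⊗ A`. -/
def qBracket (χ : A ⊗[k] A →ₗ[k] A ⊗[k] A) : A ⊗[k] A →ₗ[k] A :=
  LinearMap.mul' k A ∘ₗ (LinearMap.id - χ)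

/-- `χ ⊗ id` acting on `A ⊗ (A ⊗ A)`. -/
def leftOp (χ : A ⊗[k] A →ₗ[k] A ⊗[k] A) : A ⊗[k] (A ⊗[k] A) →ₗ[k] A ⊗[k] (A ⊗[k] A) :=
  (TensorProduct.assoc k A A A).toLinearMap ∘ₗ LinearMap.rTensor A χ ∘ₗ
    (TensorProduct.assoc k A A A).symm.toLinearMap

/-- `id ⊗ χ` acting on `A ⊗ (A ⊗ A)`. -/
def rightOp (χ : A ⊗[k] A →ₗ[k] A ⊗[k] A) : A ⊗[k] (A ⊗[k] A) →ₗ[k] A ⊗[k] (A ⊗[k] A) :=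
  LinearMap.lTensor A χ

/-- `m ⊗ id : A ⊗ (A ⊗ A) → A ⊗ A`, multiplying the first two factors. -/
def mul12 : A ⊗[k] (A ⊗[k] A) →ₗ[k] A ⊗[k] A :=
  LinearMap.rTensor A (LinearMap.mul' k A) ∘ₗ (TensorProduct.assoc k A A A).symm.toLinearMap

/-- `id ⊗ m : A ⊗ (A ⊗ A) → A ⊗ A`, multiplying the last two factors. -/
def mul23 : A ⊗[k] (A ⊗[k] A) →ₗ[k] A ⊗[k] A :=
  LinearMap.lTensor A (LinearMap.mul' k A)


section Aux

variable (MA : ModuleAlgebra k H A)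

/-- Evaluation of the action at a fixed element of `A`. -/
def ev (MA : ModuleAlgebra k H A) (x : A) : H →ₗ[k] A := MA.act.toLinearMap.flip x

@[simp] lemma ev_apply (x : A) (h : H) : ev MA x h = MA.act h x := rfl

/-- `u ⊗ (v ⊗ w) ↦ (v ▷ b)(w ▷ c)(u ▷ a)`. -/
def Fm (MA : ModuleAlgebra k H A) (a b c : A) : H ⊗[k] (H ⊗[k] H) →ₗ[k] A :=
  LinearMap.mul' k A ∘ₗ
    TensorProduct.map (LinearMap.mul' k A ∘ₗ TensorProduct.map (ev MA b) (ev MA c)) (ev MA a) ∘ₗ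
    (TensorProduct.comm k H (H ⊗[k] H)).toLinearMap

@[simp] lemma Fm_tmul (a b c : A) (u v w : H) :
    Fm MA a b c (u ⊗ₜ[k] (v ⊗ₜ[k] w)) = MA.act v b * MA.act w c * MA.act u a := by
  simp [Fm]

lemma braid_tmul (u v : H) (x y : A) :
    braid MA (u ⊗ₜ[k] v) (x ⊗ₜ[k] y) = MA.act v y ⊗ₜ[k] MA.act u x := by
  simp [braid]

lemma braid_zero : braid MA (0 : H ⊗[k] H) = 0 := by
  unfold braid; rw [map_zero, map_zero, LinearMap.comp_zero]

lemma braid_add (s t : H ⊗[k] H) : braid MA (s + t) = braid MA s + braid MA t := by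
  unfold braid; rw [map_add, map_add, LinearMap.comp_add]

lemma mulAll (S : A ⊗[k] A) (x : A) :
    LinearMap.mul' k A (LinearMap.lTensor A (LinearMap.mul' k A)
      ((TensorProduct.assoc k A A A) (S ⊗ₜ[k] x))) = LinearMap.mul' k A S * x := by
  induction S using TensorProduct.induction_on with
  | zero => simp
  | tmul p q => simp [mul_assoc]
  | add s t hs ht => simp only [add_tmul, map_add, hs, ht, add_mul]

lemma key1 (R : H ⊗[k] H) (a b c : A) :
    LinearMap.mul' k A (braid MA R (a ⊗ₜ[k] (b * c))) =
      Fm MA a b c (TensorProduct.map LinearMap.id Coalgebra.comul R) := by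
  induction R using TensorProduct.induction_on with
  | zero =>
    rw [braid_zero, LinearMap.zero_apply, map_zero, map_zero, map_zero]
  | add s t hs ht =>
    simp only [braid_add, LinearMap.add_apply, map_add, hs, ht]
  | tmul u v =>
    rw [braid_tmul, TensorProduct.map_tmul, LinearMap.id_apply]
    rw [LinearMap.mul'_apply, MA.act_mul v b c]
    induction (Coalgebra.comul (R := k) v) using TensorProduct.induction_on with
    | zero => simp
    | tmul p q => simp [mul_assoc]
    | add s t hs ht =>
      simp only [map_add, LinearMap.add_apply, TensorProduct.tmul_add, hs, ht, add_mul]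

lemma key2 (r R : H ⊗[k] H) (a b c : A) :
    LinearMap.mul' k A (LinearMap.lTensor A (LinearMap.mul' k A ∘ₗ braid MA R)
      ((TensorProduct.assoc k A A A) ((braid MA r (a ⊗ₜ[k] b)) ⊗ₜ[k] c))) =
      Fm MA a b c (leg13' k H R * leg12' k H r) := by
  induction r using TensorProduct.induction_on with
  | zero =>
    rw [braid_zero, LinearMap.zero_apply, TensorProduct.zero_tmul, map_zero, map_zero,
      map_zero, map_zero, mul_zero, map_zero]
  | add s t hs ht =>
    simp only [braid_add, LinearMap.add_apply, TensorProduct.add_tmul, map_add, hs, ht, mul_add]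
  | tmul u v =>
    rw [braid_tmul]
    induction R using TensorProduct.induction_on with
    | zero =>
      rw [braid_zero, LinearMap.comp_zero, LinearMap.lTensor_zero, LinearMap.zero_apply,
        map_zero, map_zero, zero_mul, map_zero]
    | add s t hs ht =>
      have h1 : LinearMap.mul' k A ∘ₗ braid MA (s + t)
          = LinearMap.mul' k A ∘ₗ braid MA s + LinearMap.mul' k A ∘ₗ braid MA t := by
        rw [braid_add, LinearMap.comp_add]
      simp only [h1, LinearMap.lTensor_add, LinearMap.add_apply, map_add, hs, ht, add_mul]
    | tmul p q =>
      rw [TensorProduct.assoc_tmul, LinearMap.lTensor_tmul, LinearMap.comp_apply, braid_tmul,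
        LinearMap.mul'_apply, LinearMap.mul'_apply]
      simp only [leg13', leg12', Algebra.TensorProduct.map_tmul, AlgHom.coe_id, id_eq,
        Algebra.TensorProduct.includeRight_apply, Algebra.TensorProduct.includeLeft_apply,
        Algebra.TensorProduct.tmul_mul_tmul, one_mul, mul_one]
      rw [Fm_tmul, map_mul]
      simp [Module.End.mul_apply, mul_assoc]

end Aux

/- STATEMENT 8: generalized Leibniz rule in the second variable:
`[·,·]_χ ∘ (id ⊗ m) = m ∘ ([·,·]_χ ⊗ id) + m ∘ (id ⊗ [·,·]_χ) ∘ (χ ⊗ id)`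
as maps `A ⊗ A ⊗ A → A`.  (Elementwise this reads
`[a, bc]_χ = [a,b]_χ c + Σᵢ σᵢ [eᵢ, c]_χ` where `χ(a ⊗ b) = Σᵢ σᵢ ⊗ eᵢ`.) -/
theorem leibniz_second (QT : QuasiTriangular k H) (MA : ModuleAlgebra k H A) :
    qBracket (braid MA QT.R) ∘ₗ mul23 =
      LinearMap.mul' k A ∘ₗ LinearMap.rTensor A (qBracket (braid MA QT.R)) ∘ₗ
          (TensorProduct.assoc k A A A).symm.toLinearMap
        + LinearMap.mul' k A ∘ₗ LinearMap.lTensor A (qBracket (braid MA QT.R)) ∘ₗ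
            leftOp (braid MA QT.R) := by
  apply TensorProduct.ext'
  intro a z
  induction z using TensorProduct.induction_on with
  | zero => rw [TensorProduct.tmul_zero, map_zero, map_zero]
  | add x y hx hy =>
    rw [TensorProduct.tmul_add, map_add, map_add, hx, hy]
  | tmul b c =>
    have hq : ∀ x : A ⊗[k] A, qBracket (braid MA QT.R) x
        = LinearMap.mul' k A x - LinearMap.mul' k A (braid MA QT.R x) := by
      intro x
      simp [qBracket, map_sub, LinearMap.sub_apply]
    simp only [LinearMap.add_apply, LinearMap.comp_apply, mul23, leftOp,
      LinearMap.lTensor_tmul, LinearMap.mul'_apply, LinearEquiv.coe_coe,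
      TensorProduct.assoc_symm_tmul, LinearMap.rTensor_tmul]
    rw [hq (a ⊗ₜ[k] (b * c)), hq (a ⊗ₜ[k] b), LinearMap.mul'_apply, LinearMap.mul'_apply,
      key1 MA QT.R a b c, QT.id_comul]
    have hqe : qBracket (braid MA QT.R)
        = LinearMap.mul' k A - LinearMap.mul' k A ∘ₗ braid MA QT.R :=
      LinearMap.ext fun x => by
        simp [qBracket, map_sub, LinearMap.sub_apply]
    have hlT : LinearMap.lTensor A (qBracket (braid MA QT.R))
        = LinearMap.lTensor A (LinearMap.mul' k A)
          - LinearMap.lTensor A (LinearMap.mul' k A ∘ₗ braid MA QT.R) := by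
      rw [hqe, LinearMap.lTensor_sub]
    rw [hlT, LinearMap.sub_apply, map_sub, mulAll, key2 MA QT.R QT.R a b c,
      sub_mul, mul_assoc]
    abel

end
end

section
/- Let (H, R) be a quasi-triangular Hopf algebra with a Hopf-star ⋆ on H, and A a left H-module algebra with a compatible star satisfying h ▷ (a⋆) = ((S h)⋆ ▷ a)⋆. If R is anti-real, i.e. R⋆ = R⁻¹ (star applied componentwise to the tensor), then ([a,b]_χ)⋆ = [b⋆, a⋆]_{χ̄} for all a, b ∈ A, where χ̄ is the braiding from R̄ = τ(R⁻¹). -/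
/- STATEMENT 0: The R-matrix of a quasi-triangular Hopf algebra satisfies the
quantum Yang–Baxter equation R₁₂R₁₃R₂₃ = R₂₃R₁₃R₁₂ in H ⊗ H ⊗ H. -/

open TensorProduct

noncomputable section

variable (k H : Type*) [Field k] [Ring H] [HopfAlgebra k H]

variable (A : Type*) [Ring A] [Algebra k A]

variable {k H A}

section AntipodeSquareAux

open Coalgebra HopfAlgebra

variable {k' H' : Type*} [Field k'] [Ring H'] [HopfAlgebra k' H']

/-- `ε ⊗ id : H ⊗ H → H` as an algebra hom. -/
def auxEpsL : H' ⊗[k'] H' →ₐ[k'] H' :=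
  (Algebra.TensorProduct.lid k' H').toAlgHom.comp
    (Algebra.TensorProduct.map (Bialgebra.counitAlgHom k' H') (AlgHom.id k' H'))

/-- `id ⊗ ε : H ⊗ H → H` as an algebra hom. -/
def auxEpsR : H' ⊗[k'] H' →ₐ[k'] H' :=
  (Algebra.TensorProduct.rid k' k' H').toAlgHom.comp
    (Algebra.TensorProduct.map (AlgHom.id k' H') (Bialgebra.counitAlgHom k' H'))

lemma auxEpsL_tmul (a b : H') :
    auxEpsL (a ⊗ₜ[k'] b) = counit (R := k') a • b := by
  simp [auxEpsL]

lemma auxEpsR_tmul (a b : H') :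
    auxEpsR (a ⊗ₜ[k'] b) = counit (R := k') b • a := by
  simp [auxEpsR]

lemma auxEpsL_comul (h : H') : auxEpsL (comul (R := k') h) = h := by
  have h1 : ∀ x : H' ⊗[k'] H',
      auxEpsL x = (TensorProduct.lid k' H') (LinearMap.rTensor H' (counit (R := k')) x) := by
    intro x
    induction x using TensorProduct.induction_on with
    | zero => simp
    | tmul a b => simp [auxEpsL_tmul]
    | add x y hx hy => rw [map_add, map_add, map_add, hx, hy]
  rw [h1, Coalgebra.rTensor_counit_comul]
  simp

lemma auxEpsR_comul (h : H') : auxEpsR (comul (R := k') h) = h := by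
  have h1 : ∀ x : H' ⊗[k'] H',
      auxEpsR x = (TensorProduct.rid k' H') (LinearMap.lTensor H' (counit (R := k')) x) := by
    intro x
    induction x using TensorProduct.induction_on with
    | zero => simp
    | tmul a b => simp [auxEpsR_tmul]
    | add x y hx hy => rw [map_add, map_add, map_add, hx, hy]
  rw [h1, Coalgebra.lTensor_counit_comul]
  simp

lemma auxA1 (QT : QuasiTriangular k' H') :
    LinearMap.rTensor H' (Algebra.linearMap k' H' ∘ₗ counit (R := k')) QT.R = 1 := by
  set Φ : (H' ⊗[k'] H') ⊗[k'] H' →ₐ[k'] H' ⊗[k'] H' :=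
    Algebra.TensorProduct.map auxEpsL (AlgHom.id k' H') with hΦ
  have h1 : ∀ x : H' ⊗[k'] H',
      Φ (TensorProduct.map (comul (R := k')) LinearMap.id x) = x := by
    intro x
    induction x using TensorProduct.induction_on with
    | zero => simp
    | tmul a b =>
      rw [TensorProduct.map_tmul]
      simp [hΦ, Algebra.TensorProduct.map_tmul, auxEpsL_comul]
    | add x y hx hy => rw [map_add, map_add, hx, hy]
  have h2 : ∀ x : H' ⊗[k'] H', Φ (leg23 k' H' x) = x := by
    intro x
    induction x using TensorProduct.induction_on with
    | zero => simp
    | tmul a b =>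
      simp [hΦ, leg23, Algebra.TensorProduct.map_tmul, auxEpsL_tmul]
    | add x y hx hy => rw [map_add, map_add, hx, hy]
  have h3 : ∀ x : H' ⊗[k'] H',
      Φ (leg13 k' H' x)
        = LinearMap.rTensor H' (Algebra.linearMap k' H' ∘ₗ counit (R := k')) x := by
    intro x
    induction x using TensorProduct.induction_on with
    | zero => simp
    | tmul a b =>
      simp [hΦ, leg13, Algebra.TensorProduct.map_tmul, auxEpsL_tmul,
        Algebra.linearMap_apply, Algebra.algebraMap_eq_smul_one, TensorProduct.smul_tmul']
    | add x y hx hy => rw [map_add, map_add, map_add, hx, hy]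
  have key := congrArg Φ QT.comul_id
  rw [map_mul, h1, h2, h3] at key
  have h4 : LinearMap.rTensor H' (Algebra.linearMap k' H' ∘ₗ counit (R := k')) QT.R
      * (QT.R * QT.Rinv) = QT.R * QT.Rinv := by rw [← mul_assoc, ← key]
  rwa [QT.mul_inv, mul_one] at h4

lemma auxM_mul (x y : H' ⊗[k'] H') :
    LinearMap.rTensor H'
      (LinearMap.mul' k' H' ∘ₗ LinearMap.rTensor H' (antipode (R := k')))
      (leg13 k' H' x * leg23 k' H' y) =
    TensorProduct.map (antipode (R := k')) LinearMap.id x * y := by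
  induction x using TensorProduct.induction_on with
  | zero => simp
  | add x₁ x₂ h1 h2 => rw [map_add, add_mul, map_add, h1, h2, map_add, add_mul]
  | tmul a b =>
    induction y using TensorProduct.induction_on with
    | zero => simp
    | add y₁ y₂ g1 g2 => rw [map_add, mul_add, map_add, g1, g2, mul_add]
    | tmul c d =>
      simp [leg13, leg23, Algebra.TensorProduct.map_tmul,
        Algebra.TensorProduct.tmul_mul_tmul, LinearMap.rTensor_tmul,
        LinearMap.mul'_apply]

lemma auxSid (QT : QuasiTriangular k' H') :
    TensorProduct.map (antipode (R := k')) LinearMap.id QT.R = QT.Rinv := by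
  have hcomp : ∀ x : H' ⊗[k'] H',
      LinearMap.rTensor H'
        (LinearMap.mul' k' H' ∘ₗ LinearMap.rTensor H' (antipode (R := k')))
        (TensorProduct.map (comul (R := k')) LinearMap.id x)
      = LinearMap.rTensor H' (Algebra.linearMap k' H' ∘ₗ counit (R := k')) x := by
    intro x
    induction x using TensorProduct.induction_on with
    | zero => simp
    | tmul a b =>
      rw [TensorProduct.map_tmul, LinearMap.rTensor_tmul, LinearMap.rTensor_tmul]
      congr 1
      have := LinearMap.congr_fun
        (HopfAlgebra.mul_antipode_rTensor_comul (R := k') (A := H')) a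
      simpa [LinearMap.comp_apply] using this
    | add x y hx hy => rw [map_add, map_add, map_add, hx, hy]
  have key := congrArg
    (LinearMap.rTensor H'
      (LinearMap.mul' k' H' ∘ₗ LinearMap.rTensor H' (antipode (R := k'))))
    QT.comul_id
  rw [hcomp, auxA1, auxM_mul] at key
  have h4 : TensorProduct.map (antipode (R := k')) LinearMap.id QT.R * (QT.R * QT.Rinv)
      = QT.Rinv := by rw [← mul_assoc, ← key, one_mul]
  rwa [QT.mul_inv, mul_one] at h4

lemma auxXiRinv (QT : QuasiTriangular k' H') :
    LinearMap.lTensor H' (Algebra.linearMap k' H' ∘ₗ counit (R := k')) QT.Rinv = 1 := by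
  set Ξ : H' ⊗[k'] H' →ₐ[k'] H' ⊗[k'] H' :=
    Algebra.TensorProduct.map (AlgHom.id k' H')
      ((Algebra.ofId k' H').comp (Bialgebra.counitAlgHom k' H')) with hΞ
  have hXi : ∀ x : H' ⊗[k'] H',
      Ξ x = LinearMap.lTensor H' (Algebra.linearMap k' H' ∘ₗ counit (R := k')) x := by
    intro x
    induction x using TensorProduct.induction_on with
    | zero => simp
    | tmul a b =>
      simp [hΞ, Algebra.TensorProduct.map_tmul, Algebra.ofId_apply,
        LinearMap.lTensor_tmul, Algebra.linearMap_apply]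
    | add x y hx hy => rw [map_add, map_add, hx, hy]
  set Ψ : H' ⊗[k'] (H' ⊗[k'] H') →ₐ[k'] H' ⊗[k'] H' :=
    Algebra.TensorProduct.map (AlgHom.id k' H') auxEpsR with hΨ
  have h1 : ∀ x : H' ⊗[k'] H',
      Ψ (TensorProduct.map LinearMap.id (comul (R := k')) x) = x := by
    intro x
    induction x using TensorProduct.induction_on with
    | zero => simp
    | tmul a b =>
      rw [TensorProduct.map_tmul]
      simp [hΨ, Algebra.TensorProduct.map_tmul, auxEpsR_comul]
    | add x y hx hy => rw [map_add, map_add, hx, hy]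
  have h2 : ∀ x : H' ⊗[k'] H', Ψ (leg12' k' H' x) = x := by
    intro x
    induction x using TensorProduct.induction_on with
    | zero => simp
    | tmul a b =>
      simp [hΨ, leg12', Algebra.TensorProduct.map_tmul, auxEpsR_tmul]
    | add x y hx hy => rw [map_add, map_add, hx, hy]
  have h3 : ∀ x : H' ⊗[k'] H', Ψ (leg13' k' H' x) = Ξ x := by
    intro x
    induction x using TensorProduct.induction_on with
    | zero => simp
    | tmul a b =>
      simp [hΨ, hΞ, leg13', Algebra.TensorProduct.map_tmul, auxEpsR_tmul,
        Algebra.ofId_apply, Algebra.algebraMap_eq_smul_one, TensorProduct.tmul_smul]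
    | add x y hx hy => rw [map_add, map_add, map_add, hx, hy]
  have key := congrArg Ψ QT.id_comul
  rw [map_mul, h1, h2, h3] at key
  have hXiR : Ξ QT.R = 1 := by
    have h4 : Ξ QT.R * (QT.R * QT.Rinv) = QT.R * QT.Rinv := by rw [← mul_assoc, ← key]
    rwa [QT.mul_inv, mul_one] at h4
  have hXiRinv : Ξ QT.Rinv = 1 := by
    have h5 := congrArg Ξ QT.inv_mul
    rwa [map_mul, hXiR, mul_one, map_one] at h5
  rw [← hXi]
  exact hXiRinv

lemma auxN_mul (x y : H' ⊗[k'] H') :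
    LinearMap.lTensor H'
      (LinearMap.mul' k' H' ∘ₗ LinearMap.rTensor H' (antipode (R := k')))
      (leg12' k' H' x * leg13' k' H' y) =
    TensorProduct.map LinearMap.id (antipode (R := k')) x * y := by
  induction x using TensorProduct.induction_on with
  | zero => simp
  | add x₁ x₂ h1 h2 => rw [map_add, add_mul, map_add, h1, h2, map_add, add_mul]
  | tmul a b =>
    induction y using TensorProduct.induction_on with
    | zero => simp
    | add y₁ y₂ g1 g2 => rw [map_add, mul_add, map_add, g1, g2, mul_add]
    | tmul c d =>
      simp [leg12', leg13', Algebra.TensorProduct.map_tmul,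
        Algebra.TensorProduct.tmul_mul_tmul, LinearMap.lTensor_tmul,
        LinearMap.rTensor_tmul, LinearMap.mul'_apply]

lemma auxidS (QT : QuasiTriangular k' H') :
    TensorProduct.map LinearMap.id (antipode (R := k')) QT.Rinv = QT.R := by
  set Θ : H' ⊗[k'] H' →ₐ[k'] H' ⊗[k'] (H' ⊗[k'] H') :=
    Algebra.TensorProduct.map (AlgHom.id k' H') (Bialgebra.comulAlgHom k' H') with hΘdef
  have hTheta : ∀ x : H' ⊗[k'] H',
      Θ x = TensorProduct.map LinearMap.id (comul (R := k')) x := by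
    intro x
    induction x using TensorProduct.induction_on with
    | zero => simp
    | tmul a b =>
      simp [hΘdef, Algebra.TensorProduct.map_tmul, TensorProduct.map_tmul]
    | add x y hx hy => rw [map_add, map_add, hx, hy]
  have hΘR : Θ QT.R = leg13' k' H' QT.R * leg12' k' H' QT.R := by
    rw [hTheta, QT.id_comul]
  have hX : Θ QT.Rinv = leg12' k' H' QT.Rinv * leg13' k' H' QT.Rinv := by
    have hR1 : Θ QT.R * (leg12' k' H' QT.Rinv * leg13' k' H' QT.Rinv) = 1 := by
      rw [hΘR, mul_assoc, ← mul_assoc (leg12' k' H' QT.R), ← map_mul, QT.mul_inv,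
        map_one, one_mul, ← map_mul, QT.mul_inv, map_one]
    calc Θ QT.Rinv
        = Θ QT.Rinv * (Θ QT.R * (leg12' k' H' QT.Rinv * leg13' k' H' QT.Rinv)) := by
          rw [hR1, mul_one]
      _ = (Θ QT.Rinv * Θ QT.R) * (leg12' k' H' QT.Rinv * leg13' k' H' QT.Rinv) := by
          rw [mul_assoc]
      _ = leg12' k' H' QT.Rinv * leg13' k' H' QT.Rinv := by
          rw [← map_mul, QT.inv_mul, map_one, one_mul]
  have hcomp : ∀ x : H' ⊗[k'] H',
      LinearMap.lTensor H'
        (LinearMap.mul' k' H' ∘ₗ LinearMap.rTensor H' (antipode (R := k')))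
        (TensorProduct.map LinearMap.id (comul (R := k')) x)
      = LinearMap.lTensor H' (Algebra.linearMap k' H' ∘ₗ counit (R := k')) x := by
    intro x
    induction x using TensorProduct.induction_on with
    | zero => simp
    | tmul a b =>
      rw [TensorProduct.map_tmul, LinearMap.lTensor_tmul, LinearMap.lTensor_tmul]
      congr 1
      have := LinearMap.congr_fun
        (HopfAlgebra.mul_antipode_rTensor_comul (R := k') (A := H')) b
      simpa [LinearMap.comp_apply] using this
    | add x y hx hy => rw [map_add, map_add, map_add, hx, hy]
  have hN : LinearMap.lTensor H'
      (LinearMap.mul' k' H' ∘ₗ LinearMap.rTensor H' (antipode (R := k')))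
      (Θ QT.Rinv) = 1 := by
    rw [hTheta, hcomp, auxXiRinv]
  rw [hX, auxN_mul] at hN
  have h4 : TensorProduct.map LinearMap.id (antipode (R := k')) QT.Rinv * (QT.Rinv * QT.R)
      = QT.R := by rw [← mul_assoc, hN, one_mul]
  rwa [QT.inv_mul, mul_one] at h4

lemma auxSS (QT : QuasiTriangular k' H') :
    TensorProduct.map (antipode (R := k')) (antipode (R := k')) QT.R = QT.R := by
  have hmc : TensorProduct.map (antipode (R := k') (A := H')) (antipode (R := k') (A := H'))
      = TensorProduct.map (LinearMap.id (M := H')) (antipode (R := k')) ∘ₗ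
        TensorProduct.map (antipode (R := k')) (LinearMap.id (M := H')) := by
    rw [← TensorProduct.map_comp, LinearMap.id_comp, LinearMap.comp_id]
  rw [hmc, LinearMap.comp_apply, auxSid, auxidS]

end AntipodeSquareAux


/- STATEMENT 12: conjugacy for an anti-real R-matrix (`R⋆ = R⁻¹`, star applied
componentwise): `([a,b]_χ)⋆ = [b⋆, a⋆]_{χ̄}`, where `χ̄` comes from `R̄ = τ(R⁻¹)`.
Here the Hopf-star `⋆` on `H` and the compatible star on `A` are given as
involutive antilinear antihomomorphisms, with `h ▷ (a⋆) = ((S h)⋆ ▷ a)⋆`, and the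
R-matrix is written as a finite sum `R = Σᵢ R₁ᵢ ⊗ R₂ᵢ`. -/
theorem qBracket_star_antireal
    {H A : Type*} [Ring H] [HopfAlgebra ℂ H] [Ring A] [Algebra ℂ A]
    (QT : QuasiTriangular ℂ H) (MA : ModuleAlgebra ℂ H A)
    (sH : H → H) (sA : A → A)
    (hHinv : ∀ h, sH (sH h) = h)
    (hHadd : ∀ g h, sH (g + h) = sH g + sH h)
    (hHmul : ∀ g h, sH (g * h) = sH h * sH g)
    (hHsmul : ∀ (c : ℂ) (h : H), sH (c • h) = (starRingEnd ℂ c) • sH h)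
    (hAinv : ∀ a, sA (sA a) = a)
    (hAadd : ∀ a b, sA (a + b) = sA a + sA b)
    (hAmul : ∀ a b, sA (a * b) = sA b * sA a)
    (hAsmul : ∀ (c : ℂ) (a : A), sA (c • a) = (starRingEnd ℂ c) • sA a)
    (hcompat : ∀ (h : H) (a : A),
      MA.act h (sA a) = sA (MA.act (sH (HopfAlgebra.antipode (R := ℂ) h)) a))
    {ι : Type*} [Fintype ι] (R1 R2 : ι → H)
    (hR : QT.R = ∑ i, R1 i ⊗ₜ[ℂ] R2 i)
    (hantireal : ∑ i, sH (R1 i) ⊗ₜ[ℂ] sH (R2 i) = QT.Rinv) :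
    ∀ a b : A,
      sA (qBracket (braid MA QT.R) (a ⊗ₜ[ℂ] b)) =
        qBracket (braid MA ((TensorProduct.comm ℂ H H) QT.Rinv)) (sA b ⊗ₜ[ℂ] sA a) := by
  intro a b
  -- basic properties of the star on A
  have hAzero : sA 0 = 0 := by simpa using hAsmul 0 0
  have hAneg : ∀ x : A, sA (-x) = - sA x := by
    intro x
    have h := hAsmul (-1) x
    simpa [neg_smul, one_smul] using h
  have hAsub : ∀ x y : A, sA (x - y) = sA x - sA y := by
    intro x y
    rw [sub_eq_add_neg, hAadd, hAneg, sub_eq_add_neg]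
  have hAsum : ∀ (s : Finset ι) (f : ι → A),
      sA (∑ i ∈ s, f i) = ∑ i ∈ s, sA (f i) := by
    intro s f
    classical
    induction s using Finset.induction_on with
    | empty => simpa using hAzero
    | insert _ _ h ih => rw [Finset.sum_insert h, Finset.sum_insert h, hAadd, ih]
  -- the compatibility in the useful direction
  have hact : ∀ (h : H) (x : A),
      sA (MA.act h x)
        = MA.act (sH (HopfAlgebra.antipode (R := ℂ) h)) (sA x) := by
    intro h x
    have h1 := hcompat h (sA x)
    rw [hAinv] at h1
    rw [h1, hAinv]
  -- braid applied to explicit sums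
  have hbraid : ∀ (T1 T2 : ι → H) (x y : A),
      braid MA (∑ i, T1 i ⊗ₜ[ℂ] T2 i) (x ⊗ₜ[ℂ] y)
        = ∑ i, MA.act (T2 i) y ⊗ₜ[ℂ] MA.act (T1 i) x := by
    intro T1 T2 x y
    simp only [braid, map_sum, LinearMap.comp_apply, LinearMap.sum_apply,
      TensorProduct.map_tmul, TensorProduct.homTensorHomMap_apply,
      AlgHom.toLinearMap_apply, LinearEquiv.coe_coe, TensorProduct.comm_tmul]
  have hqB : ∀ (T1 T2 : ι → H) (x y : A),
      qBracket (braid MA (∑ i, T1 i ⊗ₜ[ℂ] T2 i)) (x ⊗ₜ[ℂ] y)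
        = x * y - ∑ i, MA.act (T2 i) y * MA.act (T1 i) x := by
    intro T1 T2 x y
    simp only [qBracket, LinearMap.comp_apply, LinearMap.sub_apply, LinearMap.id_apply,
      map_sub, hbraid, map_sum, LinearMap.mul'_apply]
  -- left-hand side
  have hL : sA (qBracket (braid MA QT.R) (a ⊗ₜ[ℂ] b))
      = sA b * sA a
        - ∑ i, MA.act (sH (HopfAlgebra.antipode (R := ℂ) (R1 i))) (sA a)
            * MA.act (sH (HopfAlgebra.antipode (R := ℂ) (R2 i))) (sA b) := by
    rw [hR, hqB, hAsub, hAmul, hAsum]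
    congr 1
    refine Finset.sum_congr rfl fun i _ => ?_
    rw [hAmul, hact, hact]
  -- right-hand side
  have hcommRinv : (TensorProduct.comm ℂ H H) QT.Rinv
      = ∑ i, sH (R2 i) ⊗ₜ[ℂ] sH (R1 i) := by
    rw [← hantireal, map_sum]
    simp only [TensorProduct.comm_tmul]
  have hRr : qBracket (braid MA ((TensorProduct.comm ℂ H H) QT.Rinv)) (sA b ⊗ₜ[ℂ] sA a)
      = sA b * sA a - ∑ i, MA.act (sH (R1 i)) (sA a) * MA.act (sH (R2 i)) (sA b) := by
    rw [hcommRinv]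
    exact hqB (fun i => sH (R2 i)) (fun i => sH (R1 i)) (sA b) (sA a)
  -- the bridge: a genuinely ℂ-bilinear map built from two conjugations
  set B : H →ₗ[ℂ] H →ₗ[ℂ] A := LinearMap.mk₂ ℂ
    (fun h g => sA (MA.act (sH h) (sA a) * MA.act (sH g) (sA b)))
    (by
      intro m₁ m₂ n
      simp only [hHadd, map_add, LinearMap.add_apply, add_mul, hAadd])
    (by
      intro c m n
      simp only [hHsmul, map_smul, LinearMap.smul_apply, smul_mul_assoc, hAsmul,
        Complex.conj_conj])
    (by
      intro m n₁ n₂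
      simp only [hHadd, map_add, LinearMap.add_apply, mul_add, hAadd])
    (by
      intro c m n
      simp only [hHsmul, map_smul, LinearMap.smul_apply, mul_smul_comm, hAsmul,
        Complex.conj_conj]) with hB
  have hG1 : TensorProduct.lift B
      (TensorProduct.map (HopfAlgebra.antipode (R := ℂ)) (HopfAlgebra.antipode (R := ℂ)) QT.R)
      = ∑ i, sA (MA.act (sH (HopfAlgebra.antipode (R := ℂ) (R1 i))) (sA a)
          * MA.act (sH (HopfAlgebra.antipode (R := ℂ) (R2 i))) (sA b)) := by
    rw [hR, map_sum, map_sum]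
    simp only [TensorProduct.map_tmul, TensorProduct.lift.tmul, hB, LinearMap.mk₂_apply]
  have hG2 : TensorProduct.lift B QT.R
      = ∑ i, sA (MA.act (sH (R1 i)) (sA a) * MA.act (sH (R2 i)) (sA b)) := by
    rw [hR, map_sum]
    simp only [TensorProduct.lift.tmul, hB, LinearMap.mk₂_apply]
  have hkey : ∑ i, MA.act (sH (HopfAlgebra.antipode (R := ℂ) (R1 i))) (sA a)
          * MA.act (sH (HopfAlgebra.antipode (R := ℂ) (R2 i))) (sA b)
      = ∑ i, MA.act (sH (R1 i)) (sA a) * MA.act (sH (R2 i)) (sA b) := by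
    have h2 := congrArg (TensorProduct.lift B) (auxSS QT)
    rw [hG1, hG2] at h2
    have h3 := congrArg sA h2
    rw [hAsum, hAsum] at h3
    simpa [hAinv] using h3
  rw [hL, hRr, hkey]


end
end

section
/- Let (H, R) be a quasi-triangular Hopf algebra with Hopf-star ⋆ and A a left H-module algebra with compatible star (h ▷ a⋆ = ((Sh)⋆ ▷ a)⋆). If R is real, i.e. (⋆ ⊗ ⋆)(R) = τ(R), then ([a,b]_χ)⋆ = [b⋆, a⋆]_χ for all a, b ∈ A. -/
/- STATEMENT 0: The R-matrix of a quasi-triangular Hopf algebra satisfies the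
quantum Yang–Baxter equation R₁₂R₁₃R₂₃ = R₂₃R₁₃R₁₂ in H ⊗ H ⊗ H. -/

open TensorProduct

noncomputable section

variable (k H : Type*) [Field k] [Ring H] [HopfAlgebra k H]

variable (A : Type*) [Ring A] [Algebra k A]

variable {k H A}

/-! ### Auxiliary lemmas: Drinfeld's properties of the R-matrix -/

section AuxQT

variable {K HH : Type*} [Field K] [Ring HH] [HopfAlgebra K HH]

open TensorProduct

/-- `a ⊗ b ↦ ε(a) • b` as an algebra hom. -/
def epsId : HH ⊗[K] HH →ₐ[K] HH :=
  Algebra.TensorProduct.lift ((Algebra.ofId K HH).comp (Bialgebra.counitAlgHom K HH))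
    (AlgHom.id K HH) (fun x y => by
      simpa [Algebra.ofId_apply] using Algebra.commute_algebraMap_left
        (Coalgebra.counit (R := K) x) y)

/-- `a ⊗ b ↦ ε(b) • a` as an algebra hom. -/
def idEps : HH ⊗[K] HH →ₐ[K] HH :=
  Algebra.TensorProduct.lift (AlgHom.id K HH)
    ((Algebra.ofId K HH).comp (Bialgebra.counitAlgHom K HH)) (fun x y => by
      simpa [Algebra.ofId_apply] using
        (Algebra.commute_algebraMap_left (Coalgebra.counit (R := K) y) x).symm)

@[simp] lemma epsId_tmul (a b : HH) :
    epsId (K := K) (a ⊗ₜ[K] b) = Coalgebra.counit (R := K) a • b := by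
  simp [epsId, Algebra.TensorProduct.lift_tmul, Algebra.ofId_apply, Algebra.smul_def]

@[simp] lemma idEps_tmul (a b : HH) :
    idEps (K := K) (a ⊗ₜ[K] b) = Coalgebra.counit (R := K) b • a := by
  simp [idEps, Algebra.TensorProduct.lift_tmul, Algebra.ofId_apply,
    Algebra.algebraMap_eq_smul_one, mul_smul_comm]

lemma epsId_comul (h : HH) : epsId (K := K) (Coalgebra.comul (R := K) h) = h := by
  have key : (TensorProduct.lid K HH).toLinearMap ∘ₗ
      (Coalgebra.counit (R := K) (A := HH)).rTensor HH = (epsId (K := K)).toLinearMap :=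
    TensorProduct.ext' fun a b => by simp
  have := LinearMap.congr_fun key (Coalgebra.comul (R := K) h)
  simp only [LinearMap.comp_apply, AlgHom.toLinearMap_apply, LinearEquiv.coe_coe] at this
  rw [← this, Coalgebra.rTensor_counit_comul]
  simp

lemma idEps_comul (h : HH) : idEps (K := K) (Coalgebra.comul (R := K) h) = h := by
  have key : (TensorProduct.rid K HH).toLinearMap ∘ₗ
      (Coalgebra.counit (R := K) (A := HH)).lTensor HH = (idEps (K := K)).toLinearMap :=
    TensorProduct.ext' fun a b => by simp
  have := LinearMap.congr_fun key (Coalgebra.comul (R := K) h)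
  simp only [LinearMap.comp_apply, AlgHom.toLinearMap_apply, LinearEquiv.coe_coe] at this
  rw [← this, Coalgebra.lTensor_counit_comul]
  simp

variable (QT : QuasiTriangular K HH)

lemma epsId_R (QT : QuasiTriangular K HH) : epsId (K := K) QT.R = 1 := by
  set P : (HH ⊗[K] HH) ⊗[K] HH →ₐ[K] HH ⊗[K] HH :=
    Algebra.TensorProduct.map (epsId (K := K)) (AlgHom.id K HH) with hP
  have h1 : P.toLinearMap ∘ₗ
      TensorProduct.map (Coalgebra.comul (R := K)) (LinearMap.id (M := HH)) = LinearMap.id :=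
    TensorProduct.ext' fun a b => by simp [hP, epsId_comul]
  have h2 : P.toLinearMap ∘ₗ (leg23 K HH).toLinearMap = LinearMap.id :=
    TensorProduct.ext' fun a b => by
      simp [hP, leg23, Bialgebra.counit_one]
  have h3 : P.toLinearMap ∘ₗ (leg13 K HH).toLinearMap =
      TensorProduct.mk K HH HH 1 ∘ₗ (epsId (K := K)).toLinearMap :=
    TensorProduct.ext' fun a b => by
      simp [hP, leg13, TensorProduct.smul_tmul]
  have hL : P (TensorProduct.map (Coalgebra.comul (R := K)) LinearMap.id QT.R) = QT.R := by
    simpa using LinearMap.congr_fun h1 QT.R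
  have hR13 : P (leg13 K HH QT.R) = 1 ⊗ₜ[K] epsId (K := K) QT.R := by
    simpa using LinearMap.congr_fun h3 QT.R
  have hR23 : P (leg23 K HH QT.R) = QT.R := by
    simpa using LinearMap.congr_fun h2 QT.R
  have main : QT.R = (1 ⊗ₜ[K] epsId (K := K) QT.R) * QT.R := by
    conv_lhs => rw [← hL, QT.comul_id]
    rw [map_mul, hR13, hR23]
  have h4 : (1 : HH ⊗[K] HH) = 1 ⊗ₜ[K] epsId (K := K) QT.R := by
    have := congrArg (· * QT.Rinv) main
    simpa [mul_assoc, QT.mul_inv] using this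
  have := congrArg (epsId (K := K)) h4
  simpa [Bialgebra.counit_one] using this.symm

lemma idEps_R (QT : QuasiTriangular K HH) : idEps (K := K) QT.R = 1 := by
  set Q : HH ⊗[K] (HH ⊗[K] HH) →ₐ[K] HH ⊗[K] HH :=
    Algebra.TensorProduct.map (AlgHom.id K HH) (idEps (K := K)) with hQ
  have h1 : Q.toLinearMap ∘ₗ
      TensorProduct.map (LinearMap.id (M := HH)) (Coalgebra.comul (R := K)) = LinearMap.id :=
    TensorProduct.ext' fun a b => by simp [hQ, idEps_comul]
  have h2 : Q.toLinearMap ∘ₗ (leg12' K HH).toLinearMap = LinearMap.id :=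
    TensorProduct.ext' fun a b => by
      simp [hQ, leg12', Bialgebra.counit_one]
  have h3 : Q.toLinearMap ∘ₗ (leg13' K HH).toLinearMap =
      (TensorProduct.mk K HH HH).flip 1 ∘ₗ (idEps (K := K)).toLinearMap :=
    TensorProduct.ext' fun a b => by
      simp [hQ, leg13', Bialgebra.counit_one, TensorProduct.tmul_smul, TensorProduct.smul_tmul]
  have hL : Q (TensorProduct.map LinearMap.id (Coalgebra.comul (R := K)) QT.R) = QT.R := by
    simpa using LinearMap.congr_fun h1 QT.R
  have hR13 : Q (leg13' K HH QT.R) = (idEps (K := K) QT.R) ⊗ₜ[K] 1 := by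
    simpa using LinearMap.congr_fun h3 QT.R
  have hR12 : Q (leg12' K HH QT.R) = QT.R := by
    simpa using LinearMap.congr_fun h2 QT.R
  have main : QT.R = ((idEps (K := K) QT.R) ⊗ₜ[K] 1) * QT.R := by
    conv_lhs => rw [← hL, QT.id_comul]
    rw [map_mul, hR13, hR12]
  have h4 : (1 : HH ⊗[K] HH) = (idEps (K := K) QT.R) ⊗ₜ[K] 1 := by
    have := congrArg (· * QT.Rinv) main
    simpa [mul_assoc, QT.mul_inv] using this
  have := congrArg (idEps (K := K)) h4
  simpa [Bialgebra.counit_one] using this.symm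

lemma idEps_Rinv (QT : QuasiTriangular K HH) : idEps (K := K) QT.Rinv = 1 := by
  have h := congrArg (idEps (K := K)) QT.inv_mul
  rw [map_mul, idEps_R QT, mul_one, map_one] at h
  exact h

/-- `(S ⊗ id) R = R⁻¹`. -/
lemma map_antipode_id_R (QT : QuasiTriangular K HH) :
    TensorProduct.map (HopfAlgebra.antipode (R := K)) LinearMap.id QT.R = QT.Rinv := by
  obtain ⟨T, hT⟩ := TensorProduct.exists_finset (R := K) QT.R
  set S : HH →ₗ[K] HH := HopfAlgebra.antipode (R := K) with hS
  set Ψ : (HH ⊗[K] HH) ⊗[K] HH →ₗ[K] HH ⊗[K] HH :=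
    TensorProduct.map (LinearMap.mul' K HH ∘ₗ S.rTensor HH) LinearMap.id with hΨ
  have c1 : Ψ ∘ₗ TensorProduct.map (Coalgebra.comul (R := K)) (LinearMap.id (M := HH)) =
      TensorProduct.map ((Algebra.linearMap K HH) ∘ₗ Coalgebra.counit (R := K)) LinearMap.id := by
    rw [hΨ, ← TensorProduct.map_comp]
    congr 1
    rw [LinearMap.comp_assoc, HopfAlgebra.mul_antipode_rTensor_comul]
  have c2 : TensorProduct.map ((Algebra.linearMap K HH) ∘ₗ Coalgebra.counit (R := K))
      (LinearMap.id (M := HH)) QT.R = 1 := by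
    have e : TensorProduct.map ((Algebra.linearMap K HH) ∘ₗ Coalgebra.counit (R := K))
        (LinearMap.id (M := HH)) = TensorProduct.mk K HH HH 1 ∘ₗ (epsId (K := K)).toLinearMap :=
      TensorProduct.ext' fun a b => by
        simp [Algebra.algebraMap_eq_smul_one, TensorProduct.smul_tmul]
    rw [e]
    simp [epsId_R QT, Algebra.TensorProduct.one_def]
  have hL : Ψ (TensorProduct.map (Coalgebra.comul (R := K)) LinearMap.id QT.R) = 1 := by
    have := LinearMap.congr_fun c1 QT.R
    simp only [LinearMap.comp_apply] at this
    rw [this, c2]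
  have hprod : Ψ (leg13 K HH QT.R * leg23 K HH QT.R) =
      (TensorProduct.map S LinearMap.id QT.R) * QT.R := by
    rw [hT]
    simp only [map_sum, leg13, leg23, Algebra.TensorProduct.map_tmul,
      Algebra.TensorProduct.includeLeft_apply, Algebra.TensorProduct.includeRight_apply,
      AlgHom.coe_id, id_eq, Finset.sum_mul_sum, TensorProduct.map_tmul]
    simp only [hΨ, Algebra.TensorProduct.tmul_mul_tmul, one_mul, mul_one, map_sum,
      TensorProduct.map_tmul, LinearMap.id_coe, id_eq, LinearMap.comp_apply,
      LinearMap.rTensor_tmul, LinearMap.mul'_apply]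
  have key : (TensorProduct.map S LinearMap.id QT.R) * QT.R = 1 := by
    rw [← hprod, ← QT.comul_id, hL]
  have := congrArg (· * QT.Rinv) key
  simpa [mul_assoc, QT.mul_inv] using this

/-- `(id ⊗ S) R⁻¹ = R`. -/
lemma map_id_antipode_Rinv (QT : QuasiTriangular K HH) :
    TensorProduct.map LinearMap.id (HopfAlgebra.antipode (R := K)) QT.Rinv = QT.R := by
  obtain ⟨T, hT⟩ := TensorProduct.exists_finset (R := K) QT.Rinv
  set S : HH →ₗ[K] HH := HopfAlgebra.antipode (R := K) with hS
  set D : HH ⊗[K] HH →ₐ[K] HH ⊗[K] (HH ⊗[K] HH) :=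
    Algebra.TensorProduct.map (AlgHom.id K HH) (Bialgebra.comulAlgHom K HH) with hD
  have hDlin : D.toLinearMap =
      TensorProduct.map (LinearMap.id (M := HH)) (Coalgebra.comul (R := K)) :=
    TensorProduct.ext' fun a b => by simp [hD]
  -- D Rinv = leg12' Rinv * leg13' Rinv
  have hDR : D QT.R = leg13' K HH QT.R * leg12' K HH QT.R := by
    have := LinearMap.congr_fun hDlin QT.R
    simp only [AlgHom.toLinearMap_apply] at this
    rw [this, QT.id_comul]
  have hy : (leg12' K HH QT.Rinv * leg13' K HH QT.Rinv) * D QT.R = 1 := by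
    rw [hDR]
    calc leg12' K HH QT.Rinv * leg13' K HH QT.Rinv * (leg13' K HH QT.R * leg12' K HH QT.R)
        = leg12' K HH QT.Rinv * (leg13' K HH QT.Rinv * leg13' K HH QT.R) * leg12' K HH QT.R := by
          simp only [mul_assoc]
      _ = leg12' K HH QT.Rinv * leg13' K HH (QT.Rinv * QT.R) * leg12' K HH QT.R := by
          rw [map_mul]
      _ = leg12' K HH QT.Rinv * leg12' K HH QT.R := by rw [QT.inv_mul, map_one, mul_one]
      _ = leg12' K HH (QT.Rinv * QT.R) := by rw [map_mul]
      _ = 1 := by rw [QT.inv_mul, map_one]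
  have hz : D QT.R * D QT.Rinv = 1 := by rw [← map_mul, QT.mul_inv, map_one]
  have hDRinv : D QT.Rinv = leg12' K HH QT.Rinv * leg13' K HH QT.Rinv := by
    have h := congrArg (· * D QT.Rinv) hy
    simpa [mul_assoc, hz] using h.symm
  set Ψ : HH ⊗[K] (HH ⊗[K] HH) →ₗ[K] HH ⊗[K] HH :=
    TensorProduct.map LinearMap.id (LinearMap.mul' K HH ∘ₗ S.lTensor HH) with hΨ
  have c1 : Ψ ∘ₗ TensorProduct.map (LinearMap.id (M := HH)) (Coalgebra.comul (R := K)) =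
      TensorProduct.map LinearMap.id ((Algebra.linearMap K HH) ∘ₗ Coalgebra.counit (R := K)) := by
    rw [hΨ, ← TensorProduct.map_comp]
    congr 1
    rw [LinearMap.comp_assoc, HopfAlgebra.mul_antipode_lTensor_comul]
  have c2 : TensorProduct.map (LinearMap.id (M := HH))
      ((Algebra.linearMap K HH) ∘ₗ Coalgebra.counit (R := K)) QT.Rinv = 1 := by
    have e : TensorProduct.map (LinearMap.id (M := HH))
        ((Algebra.linearMap K HH) ∘ₗ Coalgebra.counit (R := K)) =
        (TensorProduct.mk K HH HH).flip 1 ∘ₗ (idEps (K := K)).toLinearMap :=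
      TensorProduct.ext' fun a b => by
        simp [Algebra.algebraMap_eq_smul_one, TensorProduct.tmul_smul, TensorProduct.smul_tmul]
    rw [e]
    simp [idEps_Rinv QT, Algebra.TensorProduct.one_def]
  have hL : Ψ (D QT.Rinv) = 1 := by
    have e1 := LinearMap.congr_fun hDlin QT.Rinv
    simp only [AlgHom.toLinearMap_apply] at e1
    have := LinearMap.congr_fun c1 QT.Rinv
    simp only [LinearMap.comp_apply] at this
    rw [e1, this, c2]
  have hprod : Ψ (leg12' K HH QT.Rinv * leg13' K HH QT.Rinv) =
      QT.Rinv * (TensorProduct.map LinearMap.id S QT.Rinv) := by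
    rw [hT]
    simp only [map_sum, leg12', leg13', Algebra.TensorProduct.map_tmul,
      Algebra.TensorProduct.includeLeft_apply, Algebra.TensorProduct.includeRight_apply,
      AlgHom.coe_id, id_eq, Finset.sum_mul_sum, TensorProduct.map_tmul]
    simp only [hΨ, Algebra.TensorProduct.tmul_mul_tmul, one_mul, mul_one, map_sum,
      TensorProduct.map_tmul, LinearMap.id_coe, id_eq, LinearMap.comp_apply,
      LinearMap.lTensor_tmul, LinearMap.mul'_apply]
  have key : QT.Rinv * (TensorProduct.map LinearMap.id S QT.Rinv) = 1 := by
    rw [← hprod, ← hDRinv, hL]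
  have := congrArg (QT.R * ·) key
  simpa [← mul_assoc, QT.mul_inv] using this

/-- `(S ⊗ S) R = R`. -/
lemma map_antipode_antipode_R (QT : QuasiTriangular K HH) :
    TensorProduct.map (HopfAlgebra.antipode (R := K)) (HopfAlgebra.antipode (R := K)) QT.R
      = QT.R := by
  set S : HH →ₗ[K] HH := HopfAlgebra.antipode (R := K) with hS
  have comp : TensorProduct.map S S =
      (TensorProduct.map (LinearMap.id (M := HH)) S) ∘ₗ
        (TensorProduct.map S (LinearMap.id (M := HH))) := by
    rw [← TensorProduct.map_comp]
    simp
  rw [comp, LinearMap.comp_apply, map_antipode_id_R QT, map_id_antipode_Rinv QT]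

end AuxQT

/- STATEMENT 13: conjugacy for a real R-matrix (`(⋆ ⊗ ⋆)(R) = τ(R)`):
`([a,b]_χ)⋆ = [b⋆, a⋆]_χ`.  The Hopf-star `⋆` on `H` and the compatible star on
`A` are given as involutive antilinear antihomomorphisms, with
`h ▷ (a⋆) = ((S h)⋆ ▷ a)⋆`, and `R = Σᵢ R₁ᵢ ⊗ R₂ᵢ` as a finite sum. -/
theorem qBracket_star_real
    {H A : Type*} [Ring H] [HopfAlgebra ℂ H] [Ring A] [Algebra ℂ A]
    (QT : QuasiTriangular ℂ H) (MA : ModuleAlgebra ℂ H A)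
    (sH : H → H) (sA : A → A)
    (hHinv : ∀ h, sH (sH h) = h)
    (hHadd : ∀ g h, sH (g + h) = sH g + sH h)
    (hHmul : ∀ g h, sH (g * h) = sH h * sH g)
    (hHsmul : ∀ (c : ℂ) (h : H), sH (c • h) = (starRingEnd ℂ c) • sH h)
    (hAinv : ∀ a, sA (sA a) = a)
    (hAadd : ∀ a b, sA (a + b) = sA a + sA b)
    (hAmul : ∀ a b, sA (a * b) = sA b * sA a)
    (hAsmul : ∀ (c : ℂ) (a : A), sA (c • a) = (starRingEnd ℂ c) • sA a)
    (hcompat : ∀ (h : H) (a : A),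
      MA.act h (sA a) = sA (MA.act (sH (HopfAlgebra.antipode (R := ℂ) h)) a))
    {ι : Type*} [Fintype ι] (R1 R2 : ι → H)
    (hR : QT.R = ∑ i, R1 i ⊗ₜ[ℂ] R2 i)
    (hreal : ∑ i, sH (R1 i) ⊗ₜ[ℂ] sH (R2 i) = (TensorProduct.comm ℂ H H) QT.R) :
    ∀ a b : A,
      sA (qBracket (braid MA QT.R) (a ⊗ₜ[ℂ] b)) =
        qBracket (braid MA QT.R) (sA b ⊗ₜ[ℂ] sA a) := by
  classical
  set S : H →ₗ[ℂ] H := HopfAlgebra.antipode (R := ℂ) with hS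
  -- `(S ⊗ S) R = R`, componentwise
  have hSS : ∑ i, (S (R1 i)) ⊗ₜ[ℂ] (S (R2 i)) = QT.R := by
    have h := map_antipode_antipode_R QT
    rw [hR] at h
    simpa [map_sum, hR] using h
  -- the conjugate-linear "star" on `H ⊗ H`
  have hH0 : sH 0 = 0 := by
    have := hHsmul 0 0; simpa using this
  let F : H →+ H →+ H ⊗[ℂ] H :=
    { toFun := fun h => AddMonoidHom.mk' (fun g => sH h ⊗ₜ[ℂ] sH g)
        (fun a b => by simp [hHadd, TensorProduct.tmul_add])
      map_zero' := by
        ext g; simp [hH0]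
      map_add' := fun a b => by
        ext g; simp [hHadd, TensorProduct.add_tmul] }
  let starT : H ⊗[ℂ] H →+ H ⊗[ℂ] H :=
    TensorProduct.liftAddHom F (fun r m n => by
      show sH (r • m) ⊗ₜ[ℂ] sH n = sH m ⊗ₜ[ℂ] sH (r • n)
      rw [hHsmul, hHsmul, TensorProduct.smul_tmul])
  have starT_tmul : ∀ x y : H, starT (x ⊗ₜ[ℂ] y) = sH x ⊗ₜ[ℂ] sH y := fun x y => rfl
  -- key identity: Σ sH(S R1ᵢ) ⊗ sH(S R2ᵢ) = Σ R2ᵢ ⊗ R1ᵢ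
  have key2 : ∑ i, sH (S (R1 i)) ⊗ₜ[ℂ] sH (S (R2 i)) = ∑ i, (R2 i) ⊗ₜ[ℂ] (R1 i) := by
    calc ∑ i, sH (S (R1 i)) ⊗ₜ[ℂ] sH (S (R2 i))
        = starT (∑ i, (S (R1 i)) ⊗ₜ[ℂ] (S (R2 i))) := by
          rw [map_sum]
          exact Finset.sum_congr rfl fun i _ => (starT_tmul _ _).symm
      _ = starT QT.R := by rw [hSS]
      _ = ∑ i, sH (R1 i) ⊗ₜ[ℂ] sH (R2 i) := by
          rw [hR, map_sum]
          exact Finset.sum_congr rfl fun i _ => starT_tmul _ _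
      _ = (TensorProduct.comm ℂ H H) QT.R := hreal
      _ = ∑ i, (R2 i) ⊗ₜ[ℂ] (R1 i) := by rw [hR, map_sum]; simp
  -- the action respects stars
  have hact : ∀ (h : H) (x : A),
      sA (MA.act h x) = MA.act (sH (S h)) (sA x) := by
    intro h x
    have e := congrArg sA (hcompat h (sA x))
    simp only [hAinv] at e
    simpa [hS] using e
  -- expansion of the braided bracket
  have hq : ∀ x y : A, qBracket (braid MA QT.R) (x ⊗ₜ[ℂ] y) =
      x * y - ∑ i, (MA.act (R2 i) y) * (MA.act (R1 i) x) := by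
    intro x y
    simp [qBracket, braid, hR, map_sum, LinearMap.sub_apply, LinearMap.sum_apply,
      TensorProduct.homTensorHomMap_apply, TensorProduct.map_tmul, LinearMap.mul'_apply,
      TensorProduct.sub_tmul, Finset.mul_sum, Finset.sum_mul]
  intro a b
  rw [hq a b, hq (sA b) (sA a)]
  let sAhom : A →+ A := AddMonoidHom.mk' sA hAadd
  have hsA : ∀ x : A, sAhom x = sA x := fun _ => rfl
  have LHS : sA (a * b - ∑ i, (MA.act (R2 i) b) * (MA.act (R1 i) a)) =
      sA b * sA a -
        ∑ i, MA.act (sH (S (R1 i))) (sA a) * MA.act (sH (S (R2 i))) (sA b) := by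
    rw [← hsA, map_sub, map_sum]
    simp only [hsA, hAmul a b]
    congr 1
    refine Finset.sum_congr rfl fun i _ => ?_
    rw [hAmul, hact, hact]
  rw [LHS]
  congr 1
  -- apply the evaluation functional to key2
  let Φ : H ⊗[ℂ] H →ₗ[ℂ] A :=
    LinearMap.mul' ℂ A ∘ₗ TensorProduct.map
      ((LinearMap.applyₗ (sA a)) ∘ₗ MA.act.toLinearMap)
      ((LinearMap.applyₗ (sA b)) ∘ₗ MA.act.toLinearMap)
  have hΦ : ∀ x y : H, Φ (x ⊗ₜ[ℂ] y) = MA.act x (sA a) * MA.act y (sA b) := by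
    intro x y
    simp [Φ, TensorProduct.map_tmul, LinearMap.mul'_apply]
  have := congrArg Φ key2
  rw [map_sum, map_sum] at this
  simp only [hΦ] at this
  exact this

end
end
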